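/- arXiv:0803.1331 — 2 statements merged into one kernel-verified Lean document; each statement's English description precedes it below -/
import Mathlib

section
/- Let L be a group and H a subgroup of L of finite index. For a group G and n ≥ 1, let r_n(G) denote the number of equivalence classes of irreducible n-dimensional complex representations of G. Assume r_n(L) is finite for every n. Then r_n(H) is finite for every n, and for every real number s, the series ∑_{n≥1} r_n(H)·n^{−s} converges if and only if the series ∑_{n≥1} r_n(L)·n^{−s} converges; in particular the representation zeta functions of H and L have the same abscissa of convergence. -/
/-- Two `n`-dimensional complex representations are equivalent if there is a
`G`-equivariant linear isomorphism between their spaces. -/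
def RepEquiv {G : Type*} [Group G] {n : ℕ} (ρ σ : Representation ℂ G (Fin n → ℂ)) : Prop :=
  ∃ e : (Fin n → ℂ) ≃ₗ[ℂ] (Fin n → ℂ), ∀ g v, e (ρ g v) = σ g (e v)

/-- An `n`-dimensional complex representation is irreducible if its space is nonzero
(`0 < n`) and it has no invariant subspaces other than `⊥` and `⊤`. -/
def IsIrrRep {G : Type*} [Group G] {n : ℕ} (ρ : Representation ℂ G (Fin n → ℂ)) : Prop :=
  0 < n ∧ ∀ W : Submodule ℂ (Fin n → ℂ), (∀ g, ∀ v ∈ W, ρ g v ∈ W) → W = ⊥ ∨ W = ⊤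

/-- The type of equivalence classes of irreducible `n`-dimensional complex
representations of `G`. -/
def IrrClasses (G : Type*) [Group G] (n : ℕ) : Type _ :=
  Quot (fun ρ σ : {ρ : Representation ℂ G (Fin n → ℂ) // IsIrrRep ρ} => RepEquiv ρ.1 σ.1)

/-- `r_n(G)`: the number of equivalence classes of irreducible `n`-dimensional complex
representations of `G`. -/
noncomputable def rn (G : Type*) [Group G] (n : ℕ) : ℕ :=
  Nat.card (IrrClasses G n)

/-!
Write `k = [L : H]`. Coinduction from `H` to `L` multiplies dimensions by at most `k`, and by
Frobenius reciprocity every irreducible representation of `H` sits inside the restriction of an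
irreducible representation of `L` of dimension at most `k` times larger, while every irreducible
representation of `L` sits inside the coinduction of an irreducible representation of `H` of no
larger dimension. Pairwise inequivalent irreducible subrepresentations of a finite-dimensional
representation have total dimension at most its dimension, so both correspondences have fibres of
at most `k²` classes, and they change dimensions by a factor at most `k`. Hence `H` has finitely
many classes in each dimension, and each Dirichlet series `∑ ρ, (dim ρ)^(-s)` over the irreducible
classes is dominated by `k² k^|s|` times the other.
-/

open Module

theorem Submodule.finrank_range_sup_of_injective_mkQ_comp {K V V' : Type*} [DivisionRing K]
    [AddCommGroup V] [Module K V] [AddCommGroup V'] [Module K V'] [FiniteDimensional K V]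
    (N : Submodule K V) (f : V' →ₗ[K] V) (hf : Function.Injective (N.mkQ ∘ₗ f)) :
    finrank K ↥(LinearMap.range f ⊔ N) = finrank K V' + finrank K N := by
  have hdisj : LinearMap.range f ⊓ N = ⊥ := by
    refine eq_bot_iff.mpr fun _ ⟨⟨u, hu⟩, hN⟩ => ?_
    subst hu
    have hu0 : u = 0 := hf (((Submodule.Quotient.mk_eq_zero N).mpr hN).trans (map_zero _).symm)
    simp [hu0]
  have := Submodule.finrank_sup_add_finrank_inf_eq (LinearMap.range f) N
  rwa [hdisj, finrank_bot, add_zero, LinearMap.finrank_range_of_inj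
    (show Function.Injective (N.mkQ ∘ f) from hf).of_comp] at this

namespace Representation

section Restriction

variable {k G G' V W : Type*} [Semiring k] [Monoid G] [Monoid G'] [AddCommMonoid V] [Module k V]
  [AddCommMonoid W] [Module k W] {ρ : Representation k G V} {σ : Representation k G W}

def IntertwiningMap.res (φ : G' →* G) (f : ρ.IntertwiningMap σ) :
    IntertwiningMap (ρ.comp φ) (σ.comp φ) :=
  ⟨f.toLinearMap, fun g => f.isIntertwining' (φ g)⟩

@[simp] theorem IntertwiningMap.res_apply (φ : G' →* G) (f : ρ.IntertwiningMap σ) (v : V) :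
    f.res φ v = f v := rfl

end Restriction

section Irreducible

variable {k G V W : Type*} [Field k] [Monoid G] [AddCommGroup V] [Module k V]
  [AddCommGroup W] [Module k W] {ρ : Representation k G V} {σ : Representation k G W}

theorem isIrreducible_iff :
    IsIrreducible ρ ↔ Nontrivial V ∧
      ∀ U : Submodule k V, (∀ g, ∀ v ∈ U, ρ g v ∈ U) → U = ⊥ ∨ U = ⊤ := by
  constructor
  · intro h
    refine ⟨?_, fun U hU => ?_⟩
    · by_contra hV
      rw [not_nontrivial_iff_subsingleton] at hV
      exact bot_ne_top (Subrepresentation.toSubmodule_injective (ρ := ρ) (Subsingleton.elim _ _))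
    · rcases h.eq_bot_or_eq_top ⟨U, fun g _ hv => hU g _ hv⟩ with hbot | htop
      · exact .inl (congrArg Subrepresentation.toSubmodule hbot)
      · exact .inr (congrArg Subrepresentation.toSubmodule htop)
  · rintro ⟨hV, h⟩
    have : Nontrivial (Subrepresentation ρ) :=
      ⟨⊥, ⊤, fun hbt => bot_ne_top (congrArg Subrepresentation.toSubmodule hbt)⟩
    refine ⟨fun S => ?_⟩
    rcases h S.toSubmodule fun g _ hv => S.apply_mem_toSubmodule g hv with hbot | htop
    · exact .inl (Subrepresentation.toSubmodule_injective hbot)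
    · exact .inr (Subrepresentation.toSubmodule_injective htop)

theorem IsIrreducible.nontrivial [IsIrreducible ρ] : Nontrivial V :=
  (isIrreducible_iff.mp ‹_›).1

theorem IsIrreducible.of_equiv [IsIrreducible ρ] (e : ρ.Equiv σ) : IsIrreducible σ := by
  obtain ⟨hV, h⟩ := isIrreducible_iff.mp ‹IsIrreducible ρ›
  refine isIrreducible_iff.mpr ⟨e.toLinearEquiv.symm.toEquiv.nontrivial, fun U hU => ?_⟩
  have hcomap : U.comap e.toLinearEquiv.toLinearMap = ⊥ ∨
      U.comap e.toLinearEquiv.toLinearMap = ⊤ :=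
    h _ fun g v hv => by
      simpa [Submodule.mem_comap, Equiv.toLinearEquiv_apply, e.isIntertwining] using hU g _ hv
  rw [← Submodule.map_comap_eq_of_surjective e.toLinearEquiv.surjective U]
  rcases hcomap with hbot | htop
  · exact .inl (by rw [hbot, Submodule.map_bot])
  · exact .inr (by
      rw [htop, Submodule.map_top, LinearMap.range_eq_top.mpr e.toLinearEquiv.surjective])

def quotientMkQ (U : Submodule k V) (hU : ∀ g, U ≤ U.comap (ρ g)) :
    ρ.IntertwiningMap (ρ.quotient U hU) :=
  ⟨U.mkQ, fun _ => rfl⟩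

theorem IntertwiningMap.exists_comp_eq_of_range_le {V' : Type*} [AddCommGroup V'] [Module k V']
    {ρ' : Representation k G V'} (f : ρ'.IntertwiningMap σ) (g : ρ.IntertwiningMap σ)
    (hg : Function.Injective g) (hfg : f.range ≤ g.range) :
    ∃ h : ρ'.IntertwiningMap ρ, g.comp h = f := by
  let e := LinearEquiv.ofInjective g.toLinearMap hg
  have hge : ∀ w (hw : w ∈ LinearMap.range g.toLinearMap), g (e.symm ⟨w, hw⟩) = w := fun w hw =>
    congrArg Subtype.val (e.apply_symm_apply ⟨w, hw⟩)
  have hf : ∀ v, f v ∈ LinearMap.range g.toLinearMap := fun v => hfg ⟨v, rfl⟩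
  refine ⟨⟨e.symm.toLinearMap ∘ₗ f.toLinearMap.codRestrict _ hf, fun x => ?_⟩, ?_⟩
  · ext v
    apply hg
    change g (e.symm ⟨f (ρ' x v), _⟩) = g (ρ x (e.symm ⟨f v, _⟩))
    rw [hge, f.isIntertwining, g.isIntertwining, hge]
  · ext v
    exact hge _ (hf v)

theorem sum_finrank_le_finrank [FiniteDimensional k W] {ι : Type*} {V : ι → Type*}
    [∀ i, AddCommGroup (V i)] [∀ i, Module k (V i)] {ρ : ∀ i, Representation k G (V i)}
    [∀ i, (ρ i).IsIrreducible] (hρ : ∀ i j (f : (ρ i).IntertwiningMap (ρ j)), f ≠ 0 → i = j)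
    (σ : Representation k G W) (T : Finset ι)
    (hT : ∀ i ∈ T, ∃ f : (ρ i).IntertwiningMap σ, f ≠ 0) :
    ∑ i ∈ T, finrank k (V i) ≤ finrank k W := by
  classical
  -- `N` is spanned by the images of the `ρ i` with `i ∈ T` and contains no image of another `ρ i`.
  suffices ∃ N : Subrepresentation σ, finrank k N.toSubmodule = ∑ i ∈ T, finrank k (V i) ∧
      ∀ i (f : (ρ i).IntertwiningMap σ), f ≠ 0 → f.range ≤ N → i ∈ T by
    obtain ⟨N, hN, -⟩ := this
    exact hN ▸ Submodule.finrank_le _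
  induction T using Finset.induction_on with
  | empty =>
    refine ⟨⊥, finrank_bot k W, fun i f hf hle => absurd ?_ hf⟩
    ext v
    exact (Submodule.mem_bot k).mp (hle ⟨v, rfl⟩)
  | insert i₀ T hi₀ ih =>
    obtain ⟨N, hN, hNT⟩ := ih fun i hi => hT i (Finset.mem_insert_of_mem hi)
    obtain ⟨f₀, hf₀⟩ := hT i₀ (Finset.mem_insert_self _ _)
    let q := quotientMkQ N.toSubmodule fun g _ hv => N.apply_mem_toSubmodule g hv
    have hqN : ∀ v, q v = 0 ↔ v ∈ N := fun v => Submodule.Quotient.mk_eq_zero _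
    have hTq : ∀ i (f : (ρ i).IntertwiningMap σ), f ≠ 0 → q.comp f = 0 → i ∈ T :=
      fun i f hf h0 => hNT i f hf fun _ ⟨v, hv⟩ => hv ▸ (hqN _).mp congr($h0 v)
    have hq : ∀ i (f : (ρ i).IntertwiningMap σ), f ≠ 0 → i ∉ T → Function.Injective (q.comp f) :=
      fun i f hf hi => (IsIrreducible.injective_or_eq_zero _).resolve_right (hi ∘ hTq i f hf)
    have hinj₀ := hq i₀ f₀ hf₀ hi₀
    refine ⟨f₀.range ⊔ N, ?_, fun i f hf hle => ?_⟩
    · rw [Finset.sum_insert hi₀, ← hN,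
        ← N.toSubmodule.finrank_range_sup_of_injective_mkQ_comp f₀.toLinearMap hinj₀]
      rfl
    · by_cases hi : i ∈ T
      · exact Finset.mem_insert_of_mem hi
      have hrange : (q.comp f).range ≤ (q.comp f₀).range := by
        rintro - ⟨v, rfl⟩
        obtain ⟨-, ⟨u, rfl⟩, n, hn, huv⟩ := Submodule.mem_sup.mp (hle ⟨v, rfl⟩)
        refine ⟨u, ?_⟩
        change q (f₀ u) = q (f v)
        rw [← show f₀ u + n = f v from huv, map_add, (hqN n).mpr hn, add_zero]
      obtain ⟨h, hh⟩ := (q.comp f).exists_comp_eq_of_range_le (q.comp f₀) hinj₀ hrange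
      refine Finset.mem_insert.mpr (.inl (hρ i i₀ h ?_))
      rintro rfl
      exact hi (hTq i f hf (by rw [← hh]; ext; simp))

theorem exists_isCoatom_subrepresentation [FiniteDimensional k V] [Nontrivial V]
    (ρ : Representation k G V) : ∃ M : Subrepresentation ρ, IsCoatom M := by
  have : WellFoundedGT (Subrepresentation ρ) :=
    StrictMono.wellFoundedGT (f := Subrepresentation.toSubmodule) fun _ _ h => h
  have : IsCoatomic (Subrepresentation ρ) := isCoatomic_of_orderTop_gt_wellFounded wellFounded_gt
  have hbot : (⊥ : Subrepresentation ρ) ≠ ⊤ := fun h =>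
    bot_ne_top (congrArg Subrepresentation.toSubmodule h)
  obtain ⟨M, hM, -⟩ := (eq_top_or_exists_le_coatom (⊥ : Subrepresentation ρ)).resolve_left hbot
  exact ⟨M, hM⟩

theorem isIrreducible_quotient_of_isCoatom {M : Subrepresentation ρ} (hM : IsCoatom M) :
    IsIrreducible (ρ.quotient M.toSubmodule fun g _ hv => M.apply_mem_toSubmodule g hv) := by
  refine isIrreducible_iff.mpr ⟨Submodule.Quotient.nontrivial_iff.mpr fun h =>
    hM.1 (Subrepresentation.toSubmodule_injective h), fun U hU => ?_⟩
  let S : Subrepresentation ρ := ⟨U.comap M.toSubmodule.mkQ, fun g v hv => hU g _ hv⟩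
  have hMS : M ≤ S := fun v hv => by
    change Submodule.Quotient.mk v ∈ U
    rw [(Submodule.Quotient.mk_eq_zero _).mpr hv]
    exact U.zero_mem
  rw [← Submodule.map_comap_eq_of_surjective M.toSubmodule.mkQ_surjective U]
  rcases hM.le_iff.mp hMS with hS | hS
  · right
    rw [show U.comap M.toSubmodule.mkQ = ⊤ from congrArg Subrepresentation.toSubmodule hS,
      Submodule.map_top, Submodule.range_mkQ]
  · left
    rw [show U.comap M.toSubmodule.mkQ = M.toSubmodule from
      congrArg Subrepresentation.toSubmodule hS, Submodule.mkQ_map_self]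

end Irreducible

section Coinduction

variable {k L V W : Type*} [CommRing k] [Group L] {H : Subgroup L} [AddCommGroup V] [Module k V]
  [AddCommGroup W] [Module k W]

open QuotientGroup

theorem coindV_apply_eq {ρ : Representation k H V} (F : coindV H.subtype ρ) {x y : L}
    (hxy : x * y⁻¹ ∈ H) : F.1 x = ρ ⟨x * y⁻¹, hxy⟩ (F.1 y) := by
  simpa using F.2 ⟨x * y⁻¹, hxy⟩ y

open Classical in
noncomputable def coindUnit (ρ : Representation k H V) :
    IntertwiningMap ρ ((coind H.subtype ρ).comp H.subtype) where
  toFun v := ⟨fun x => if hx : x ∈ H then ρ ⟨x, hx⟩ v else 0, fun h x => by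
    dsimp only [Subgroup.subtype_apply]
    by_cases hx : x ∈ H
    · rw [dif_pos (mul_mem h.2 hx), dif_pos hx, ← Module.End.mul_apply, ← map_mul]
      rfl
    · have hhx : (h : L) * x ∉ H := fun hhx => hx (by simpa using mul_mem (inv_mem h.2) hhx)
      rw [dif_neg hx, dif_neg hhx, map_zero]⟩
  map_add' v w := by ext x; by_cases hx : x ∈ H <;> simp [hx]
  map_smul' c v := by ext x; by_cases hx : x ∈ H <;> simp [hx]
  isIntertwining' h := by
    ext v x
    change (if hx : x ∈ H then ρ ⟨x, hx⟩ (ρ h v) else 0) =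
      if hx : x * h ∈ H then ρ ⟨x * h, hx⟩ v else 0
    by_cases hx : x ∈ H
    · rw [dif_pos hx, dif_pos (mul_mem hx h.2), ← Module.End.mul_apply, ← map_mul]
      rfl
    · have hxh : x * h ∉ H := fun hxh => hx (by simpa using mul_mem hxh (inv_mem h.2))
      rw [dif_neg hx, dif_neg hxh]

theorem coindUnit_apply_of_mem (ρ : Representation k H V) (v : V) {x : L} (hx : x ∈ H) :
    (coindUnit ρ v).1 x = ρ ⟨x, hx⟩ v := by
  simp [coindUnit, hx]

theorem coindUnit_apply_of_notMem (ρ : Representation k H V) (v : V) {x : L} (hx : x ∉ H) :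
    (coindUnit ρ v).1 x = 0 := by
  simp [coindUnit, hx]

theorem coindUnit_injective (ρ : Representation k H V) : Function.Injective (coindUnit ρ) :=
  fun v w h => by
    simpa [coindUnit_apply_of_mem _ _ H.one_mem, show (⟨1, H.one_mem⟩ : H) = 1 from rfl] using
      congr(($h).1 1)

def coindLift (σ : Representation k L W) (ρ : Representation k H V)
    (φ : IntertwiningMap (σ.comp H.subtype) ρ) : σ.IntertwiningMap (coind H.subtype ρ) where
  toFun w := ⟨fun x => φ (σ x w), fun h x => by
    simp [← φ.isIntertwining, ← Module.End.mul_apply, ← map_mul]⟩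
  map_add' w w' := by ext x; simp
  map_smul' c w := by ext x; simp
  isIntertwining' g := by
    ext w x
    change φ (σ x (σ g w)) = φ (σ (x * g) w)
    rw [map_mul, Module.End.mul_apply]

theorem coindLift_ne_zero (σ : Representation k L W) (ρ : Representation k H V)
    {φ : IntertwiningMap (σ.comp H.subtype) ρ} (hφ : φ ≠ 0) : coindLift σ ρ φ ≠ 0 := by
  refine fun h => hφ (IntertwiningMap.ext (LinearMap.ext fun w => ?_))
  simpa [coindLift] using congr(($h w).1 1)

variable (ρ : Representation k H V)

noncomputable def coindEval : coindV H.subtype ρ →ₗ[k] Quotient (rightRel H) → V :=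
  LinearMap.pi fun q => (LinearMap.proj q.out).comp (coindV H.subtype ρ).subtype

theorem coindEval_injective : Function.Injective (coindEval ρ) := by
  refine (injective_iff_map_eq_zero _).mpr fun F hF => Subtype.ext (funext fun x => ?_)
  rw [coindV_apply_eq F (rightRel_apply.mp (Quotient.mk_out x)),
    show F.1 _ = 0 from congr_fun hF _, map_zero]
  rfl

theorem sum_coind_coindUnit [Fintype (Quotient (rightRel H))] (F : coindV H.subtype ρ) :
    ∑ q : Quotient (rightRel H), coind H.subtype ρ q.out⁻¹ (coindUnit ρ (F.1 q.out)) = F := by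
  ext x
  rw [Submodule.coe_sum, Finset.sum_apply, Finset.sum_eq_single (⟦x⟧ : Quotient (rightRel H))]
  · change (coindUnit ρ _).1 (x * _) = _
    rw [coindUnit_apply_of_mem _ _ (rightRel_apply.mp (Quotient.mk_out x))]
    exact (coindV_apply_eq F _).symm
  · intro q _ hq
    change (coindUnit ρ _).1 (x * _) = 0
    refine coindUnit_apply_of_notMem _ _ fun hx => hq ?_
    rw [← Quotient.out_eq q]
    exact Quotient.sound (rightRel_apply.mpr hx)
  · exact fun h => absurd (Finset.mem_univ _) h

instance [H.FiniteIndex] : Finite (Quotient (rightRel H)) :=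
  .of_equiv _ (quotientRightRelEquivQuotientLeftRel H).symm

theorem IntertwiningMap.eq_zero_of_comp_coindUnit [H.FiniteIndex] {σ : Representation k L W}
    (f : IntertwiningMap (coind H.subtype ρ) σ) (hf : (f.res H.subtype).comp (coindUnit ρ) = 0) :
    f = 0 := by
  have := Fintype.ofFinite (Quotient (rightRel H))
  ext F
  change f F = 0
  rw [← sum_coind_coindUnit ρ F, map_sum]
  refine Finset.sum_eq_zero fun q _ => ?_
  rw [f.isIntertwining, ← IntertwiningMap.res_apply H.subtype, ← IntertwiningMap.comp_apply, hf]
  simp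

end Coinduction

section FiniteIndex

variable {k L V : Type*} [Field k] [Group L] {H : Subgroup L} [H.FiniteIndex] [AddCommGroup V]
  [Module k V] [FiniteDimensional k V] (ρ : Representation k H V)

open QuotientGroup

instance : FiniteDimensional k (coindV H.subtype ρ) :=
  .of_injective _ (coindEval_injective ρ)

theorem finrank_coindV_le : finrank k (coindV H.subtype ρ) ≤ H.index * finrank k V := by
  have := Fintype.ofFinite (Quotient (rightRel H))
  calc finrank k (coindV H.subtype ρ) ≤ finrank k (Quotient (rightRel H) → V) :=
        LinearMap.finrank_le_finrank_of_injective (coindEval_injective ρ)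
    _ = H.index * finrank k V := by
        rw [Module.finrank_pi_fintype, Finset.sum_const, Finset.card_univ, smul_eq_mul,
          H.index_eq_card, ← Nat.card_eq_fintype_card,
          Nat.card_congr (quotientRightRelEquivQuotientLeftRel H)]

end FiniteIndex

end Representation

section IrreducibleClasses

open Representation

variable {G V : Type*} [Group G] [AddCommGroup V] [Module ℂ V]

theorem repEquiv_iff {n : ℕ} {ρ σ : Representation ℂ G (Fin n → ℂ)} :
    RepEquiv ρ σ ↔ Nonempty (ρ.Equiv σ) :=
  ⟨fun ⟨e, he⟩ => ⟨.mk e fun g => LinearMap.ext (he g)⟩,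
    fun ⟨e⟩ => ⟨e.toLinearEquiv, e.toIntertwiningMap.isIntertwining⟩⟩

theorem repEquiv_equivalence (G : Type*) [Group G] (n : ℕ) :
    Equivalence fun ρ σ : {ρ : Representation ℂ G (Fin n → ℂ) // IsIrrRep ρ} =>
      RepEquiv ρ.1 σ.1 where
  refl _ := repEquiv_iff.mpr ⟨.refl _⟩
  symm h := have ⟨e⟩ := repEquiv_iff.mp h; repEquiv_iff.mpr ⟨e.symm⟩
  trans h h' :=
    have ⟨e⟩ := repEquiv_iff.mp h; have ⟨e'⟩ := repEquiv_iff.mp h'; repEquiv_iff.mpr ⟨e.trans e'⟩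

theorem isIrrRep_iff {n : ℕ} (ρ : Representation ℂ G (Fin n → ℂ)) :
    IsIrrRep ρ ↔ ρ.IsIrreducible := by
  have hn : Nontrivial (Fin n → ℂ) ↔ 0 < n := by
    refine ⟨fun h => Nat.pos_of_ne_zero ?_, fun h => ?_⟩
    · rintro rfl
      exact not_nontrivial _ h
    · have : Nonempty (Fin n) := ⟨⟨0, h⟩⟩
      infer_instance
  rw [isIrreducible_iff, hn, IsIrrRep]

abbrev IrrClass (G : Type*) [Group G] := Σ n, IrrClasses G n

namespace IrrClass

noncomputable def rep (c : IrrClass G) : Representation ℂ G (Fin c.1 → ℂ) :=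
  (Quot.out c.2).1

instance (c : IrrClass G) : c.rep.IsIrreducible :=
  (isIrrRep_iff _).mp (Quot.out c.2).2

theorem fst_pos (c : IrrClass G) : 0 < c.1 :=
  (Quot.out c.2).2.1

theorem eq_of_intertwiningMap_ne_zero {c c' : IrrClass G} (f : c.rep.IntertwiningMap c'.rep)
    (hf : f ≠ 0) : c = c' := by
  have e := f.ofBijective ((IsIrreducible.bijective_or_eq_zero f).resolve_right hf)
  obtain ⟨n, q⟩ := c
  obtain ⟨n', q'⟩ := c'
  obtain rfl : n = n' := by
    simpa using e.toLinearEquiv.finrank_eq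
  congr 1
  rw [← Quot.out_eq q, ← Quot.out_eq q']
  exact Quot.sound (repEquiv_iff.mpr ⟨e⟩)

theorem exists_equiv (σ : Representation ℂ G V) [FiniteDimensional ℂ V] [σ.IsIrreducible] :
    ∃ c : IrrClass G, c.1 = finrank ℂ V ∧ Nonempty (σ.Equiv c.rep) := by
  let e := (Module.finBasis ℂ V).equivFun
  let σ' : Representation ℂ G (Fin (finrank ℂ V) → ℂ) := (e.conjAlgEquiv ℂ).toMonoidHom.comp σ
  let e' : σ.Equiv σ' := .mk e fun g => by ext; simp [σ']
  have : σ'.IsIrreducible := IsIrreducible.of_equiv e'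
  let c : IrrClass G := ⟨_, Quot.mk _ ⟨σ', (isIrrRep_iff σ').mpr this⟩⟩
  obtain ⟨e''⟩ := repEquiv_iff.mp <|
    (repEquiv_equivalence G _).eqvGen_iff.mp (Quot.eqvGen_exact (Quot.out_eq c.2).symm)
  exact ⟨c, rfl, ⟨e'.trans e''⟩⟩

theorem exists_intertwiningMap_ne_zero (σ : Representation ℂ G V) [FiniteDimensional ℂ V]
    [Nontrivial V] :
    ∃ c : IrrClass G, c.1 ≤ finrank ℂ V ∧ ∃ f : σ.IntertwiningMap c.rep, f ≠ 0 := by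
  obtain ⟨M, hM⟩ := exists_isCoatom_subrepresentation σ
  have := isIrreducible_quotient_of_isCoatom hM
  obtain ⟨c, hc, ⟨e⟩⟩ := exists_equiv (σ.quotient M.toSubmodule _)
  have := IsIrreducible.nontrivial (ρ := σ.quotient M.toSubmodule _)
  obtain ⟨v, hv⟩ := exists_ne (0 : V ⧸ M.toSubmodule)
  refine ⟨c, hc ▸ M.toSubmodule.finrank_quotient_le,
    e.toIntertwiningMap.comp (quotientMkQ M.toSubmodule _), fun h => ?_⟩
  obtain ⟨v, rfl⟩ := M.toSubmodule.mkQ_surjective v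
  exact hv (e.toLinearEquiv.injective (congr($h v).trans (map_zero _).symm))

/-- By Schur's lemma such a map is injective, so `c` occurs as a subrepresentation of `σ`. -/
def Embeds (c : IrrClass G) (σ : Representation ℂ G V) : Prop :=
  ∃ f : c.rep.IntertwiningMap σ, f ≠ 0

theorem sum_fst_le_finrank (σ : Representation ℂ G V) [FiniteDimensional ℂ V]
    (T : Finset (IrrClass G)) (hT : ∀ c ∈ T, c.Embeds σ) : ∑ c ∈ T, c.1 ≤ finrank ℂ V := by
  simpa using sum_finrank_le_finrank (fun _ _ => eq_of_intertwiningMap_ne_zero) σ T hT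

theorem finite_setOf_embeds (σ : Representation ℂ G V) [FiniteDimensional ℂ V] :
    {c : IrrClass G | c.Embeds σ}.Finite := by
  by_contra hinf
  obtain ⟨T, hTs, hTcard⟩ := Set.Infinite.exists_subset_card_eq hinf (finrank ℂ V + 1)
  have := sum_fst_le_finrank σ T hTs
  have : T.card ≤ ∑ c ∈ T, c.1 := by
    simpa using Finset.sum_le_sum fun c (_ : c ∈ T) => Nat.one_le_iff_ne_zero.mpr c.fst_pos.ne'
  omega

theorem finite_setOf_fst_le (hfin : ∀ n, Finite (IrrClasses G n)) (m : ℕ) :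
    {c : IrrClass G | c.1 ≤ m}.Finite := by
  refine ((Set.finite_Iic m).biUnion fun n _ => Set.finite_range (Sigma.mk n)).subset ?_
  rintro ⟨n, q⟩ hn
  exact Set.mem_biUnion hn ⟨q, rfl⟩

end IrrClass

end IrreducibleClasses

section Correspondence

open Representation

variable {L : Type*} [Group L] {H : Subgroup L}

theorem IrrClass.exists_embeds_coind (d : IrrClass L) :
    ∃ c : IrrClass H, c.1 ≤ d.1 ∧ d.Embeds (coind H.subtype c.rep) := by
  have := IsIrreducible.nontrivial (ρ := d.rep)
  obtain ⟨c, hc, φ, hφ⟩ := exists_intertwiningMap_ne_zero (d.rep.comp H.subtype)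
  exact ⟨c, by simpa using hc, coindLift _ _ φ, coindLift_ne_zero _ _ hφ⟩

variable [H.FiniteIndex]

theorem IrrClass.exists_embeds_res (c : IrrClass H) :
    ∃ d : IrrClass L, d.1 ≤ H.index * c.1 ∧ c.Embeds (d.rep.comp H.subtype) := by
  have := IsIrreducible.nontrivial (ρ := c.rep)
  have : Nontrivial (coindV H.subtype c.rep) := (coindUnit_injective c.rep).nontrivial
  obtain ⟨d, hd, f, hf⟩ := exists_intertwiningMap_ne_zero (coind H.subtype c.rep)
  -- The coinduction is generated by the image of the unit, so `f` cannot kill that image.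
  refine ⟨d, hd.trans ?_, (f.res H.subtype).comp (coindUnit c.rep),
    fun h => hf (f.eq_zero_of_comp_coindUnit _ h)⟩
  simpa using finrank_coindV_le c.rep

theorem IrrClass.sum_fst_le_of_embeds_res (d : IrrClass L) (T : Finset (IrrClass H))
    (hT : ∀ c ∈ T, c.Embeds (d.rep.comp H.subtype)) : ∑ c ∈ T, c.1 ≤ H.index * d.1 :=
  calc ∑ c ∈ T, c.1 ≤ d.1 := by simpa using sum_fst_le_finrank _ T hT
    _ ≤ H.index * d.1 := Nat.le_mul_of_pos_left _ (Nat.pos_of_ne_zero H.index_ne_zero_of_finite)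

theorem IrrClass.sum_fst_le_of_embeds_coind (c : IrrClass H) (T : Finset (IrrClass L))
    (hT : ∀ d ∈ T, d.Embeds (coind H.subtype c.rep)) : ∑ d ∈ T, d.1 ≤ H.index * c.1 := by
  simpa using (sum_fst_le_finrank _ T hT).trans (finrank_coindV_le c.rep)

theorem finite_irrClasses_of_finiteIndex (hL : ∀ n, Finite (IrrClasses L n)) (n : ℕ) :
    Finite (IrrClasses H n) := by
  have hS : {c : IrrClass H | c.1 = n}.Finite := by
    refine ((IrrClass.finite_setOf_fst_le hL (H.index * n)).biUnion
      fun d _ => IrrClass.finite_setOf_embeds (d.rep.comp H.subtype)).subset fun c hc => ?_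
    obtain ⟨d, hd, hcd⟩ := c.exists_embeds_res
    exact Set.mem_biUnion (show d.1 ≤ H.index * n from hc ▸ hd) hcd
  exact Set.finite_univ_iff.mp ((hS.preimage sigma_mk_injective.injOn).subset fun _ _ => rfl)

end Correspondence

section Summability

theorem Real.rpow_neg_le_of_le_mul {k x m : ℝ} (hx : 0 < x) (hm : 0 < m) (hmx : m ≤ k * x)
    (hxm : x ≤ k * m) (s : ℝ) : x ^ (-s) ≤ k ^ |s| * m ^ (-s) := by
  have hk : 0 < k := pos_of_mul_pos_left (hm.trans_le hmx) hx.le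
  rcases le_or_gt 0 s with hs | hs
  · rw [abs_of_nonneg hs]
    calc x ^ (-s) = x⁻¹ ^ s := by rw [Real.rpow_neg hx.le, Real.inv_rpow hx.le]
      _ ≤ (k / m) ^ s := by
        refine Real.rpow_le_rpow (by positivity) ?_ hs
        rwa [le_div_iff₀ hm, inv_mul_eq_div, div_le_iff₀ hx]
      _ = k ^ s * m ^ (-s) := by
        rw [Real.div_rpow hk.le hm.le, Real.rpow_neg hm.le, div_eq_mul_inv]
  · rw [abs_of_neg hs]
    calc x ^ (-s) ≤ (k * m) ^ (-s) := Real.rpow_le_rpow hx.le hxm (by linarith)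
      _ = k ^ (-s) * m ^ (-s) := Real.mul_rpow hk.le hm.le

theorem Summable.of_le_comp_of_card_fiber_le {A B : Type*} {f : A → ℝ} {g : B → ℝ} (F : A → B)
    (K : ℕ) (hf : ∀ a, 0 ≤ f a) (hg : ∀ b, 0 ≤ g b) (hfg : ∀ a, f a ≤ g (F a))
    (hfib : ∀ b (T : Finset A), (∀ a ∈ T, F a = b) → T.card ≤ K) (hsum : Summable g) :
    Summable f := by
  have hcard : ∀ b (T : Finset {a // F a = b}), T.card ≤ K := fun b T => by
    simpa using hfib b (T.map (Function.Embedding.subtype _)) fun a ha => by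
      obtain ⟨x, -, rfl⟩ := Finset.mem_map.mp ha
      exact x.2
  have hfin : ∀ b, Finite {a // F a = b} := fun b => by
    by_contra h
    have := not_finite_iff_infinite.mp h
    obtain ⟨T, hT⟩ := Infinite.exists_subset_card_eq {a // F a = b} (K + 1)
    have := hcard b T
    omega
  rw [← (Equiv.sigmaFiberEquiv F).summable_iff]
  refine (summable_sigma_of_nonneg fun _ => hf _).mpr ⟨fun b => .of_finite,
    .of_nonneg_of_le (fun b => tsum_nonneg fun _ => hf _) (fun b => ?_) (hsum.mul_left (K : ℝ))⟩
  have := Fintype.ofFinite {a // F a = b}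
  rw [tsum_fintype]
  calc ∑ a : {a // F a = b}, f a ≤ ∑ _a : {a // F a = b}, g b :=
        Finset.sum_le_sum fun a _ => (hfg a).trans_eq (congrArg g a.2)
    _ ≤ K * g b := by
        rw [Finset.sum_const, nsmul_eq_mul]
        exact mul_le_mul_of_nonneg_right (by exact_mod_cast hcard b _) (hg b)

theorem summable_rpow_neg_of_fiberwise {A B : Type*} (wA : A → ℕ) (wB : B → ℕ) (F : A → B)
    (k : ℕ) (hwB : ∀ b, 0 < wB b) (hF : ∀ a, wB (F a) ≤ k * wA a)
    (hfib : ∀ b (T : Finset A), (∀ a ∈ T, F a = b) → ∑ a ∈ T, wA a ≤ k * wB b) {s : ℝ}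
    (h : Summable fun b => (wB b : ℝ) ^ (-s)) : Summable fun a => (wA a : ℝ) ^ (-s) := by
  refine .of_le_comp_of_card_fiber_le (g := fun b => (k : ℝ) ^ |s| * (wB b : ℝ) ^ (-s)) F (k * k)
    (fun a => by positivity) (fun b => by positivity) (fun a => ?_) (fun b T hT => ?_)
    (h.mul_left _)
  · have hwA : 0 < wA a := Nat.pos_of_ne_zero fun h0 => by
      simpa [h0] using (hwB (F a)).trans_le (hF a)
    have := hfib (F a) {a} (by simp)
    exact Real.rpow_neg_le_of_le_mul (by exact_mod_cast hwA) (by exact_mod_cast hwB _)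
      (by exact_mod_cast hF a) (by exact_mod_cast (by simpa using this)) s
  · refine Nat.le_of_mul_le_mul_right ?_ (hwB b)
    calc T.card * wB b = ∑ a ∈ T, wB (F a) := by
          rw [Finset.sum_congr rfl fun a ha => by rw [hT a ha], Finset.sum_const, smul_eq_mul]
      _ ≤ ∑ a ∈ T, k * wA a := Finset.sum_le_sum fun a _ => hF a
      _ = k * ∑ a ∈ T, wA a := (Finset.mul_sum ..).symm
      _ ≤ k * (k * wB b) := Nat.mul_le_mul_left k (hfib b T hT)
      _ = k * k * wB b := (Nat.mul_assoc ..).symm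

theorem summable_rn_iff {G : Type*} [Group G] (hfin : ∀ n, Finite (IrrClasses G n)) (s : ℝ) :
    (Summable fun n : ℕ => (rn G (n + 1) : ℝ) * ((n + 1 : ℝ) ^ (-s))) ↔
      Summable fun c : IrrClass G => (c.1 : ℝ) ^ (-s) := by
  have hfib (n : ℕ) : Summable fun _ : IrrClasses G n => (n : ℝ) ^ (-s) :=
    have := hfin n; .of_finite
  rw [summable_sigma_of_nonneg fun c => Real.rpow_nonneg (Nat.cast_nonneg _) _]
  simp only [hfib, tsum_const, nsmul_eq_mul, implies_true, true_and]
  rw [← summable_nat_add_iff 1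
    (f := fun n : ℕ => (Nat.card (IrrClasses G n) : ℝ) * (n : ℝ) ^ (-s))]
  push_cast
  rfl

end Summability

/-- If `H` is a finite-index subgroup of `L` and `r_n(L)` is finite
for every `n`, then `r_n(H)` is finite for every `n` and, for every real `s`, the series
`∑_{n≥1} r_n(H) n^{−s}` converges iff `∑_{n≥1} r_n(L) n^{−s}` converges (in particular the
two representation zeta functions have the same abscissa of convergence). -/
theorem stmt3 (L : Type*) [Group L] (H : Subgroup L) (hH : H.index ≠ 0)
    (hL : ∀ n : ℕ, Finite (IrrClasses L n)) :
    (∀ n : ℕ, Finite (IrrClasses ↥H n)) ∧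
      ∀ s : ℝ,
        (Summable fun n : ℕ => (rn ↥H (n + 1) : ℝ) * ((n + 1 : ℝ) ^ (-s))) ↔
          (Summable fun n : ℕ => (rn L (n + 1) : ℝ) * ((n + 1 : ℝ) ^ (-s))) := by
  have : H.FiniteIndex := ⟨hH⟩
  have hH_fin := finite_irrClasses_of_finiteIndex (H := H) hL
  refine ⟨hH_fin, fun s => ?_⟩
  rw [summable_rn_iff hH_fin, summable_rn_iff hL]
  choose Φ hΦ hΦH using IrrClass.exists_embeds_res (H := H)
  choose Ψ hΨ hΨL using IrrClass.exists_embeds_coind (H := H)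
  have hk : 0 < H.index := Nat.pos_of_ne_zero hH
  constructor
  · exact summable_rpow_neg_of_fiberwise (fun d => d.1) (fun c => c.1) Ψ H.index IrrClass.fst_pos
      (fun d => (hΨ d).trans (Nat.le_mul_of_pos_left _ hk))
      fun c T hT => c.sum_fst_le_of_embeds_coind T fun d hd => hT d hd ▸ hΨL d
  · exact summable_rpow_neg_of_fiberwise (fun c => c.1) (fun d => d.1) Φ H.index IrrClass.fst_pos
      hΦ fun d T hT => d.sum_fst_le_of_embeds_res T fun c hc => hT c hc ▸ hΦH c
end

section
/- Let n ≥ 1, let p be a prime, and let A ∈ M_n(ℤ_p) satisfy A^k → 0 as k → ∞. Then every entry of A^n is divisible by p (i.e. A^n ∈ p·M_n(ℤ_p)), and consequently for every natural number N, every entry of A^N is divisible by p^{⌊N/n⌋}. -/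
/-!
Reduce modulo the prime ideal `(p)`: since `A ^ k → 0`, the entries of some power `A ^ k` have
norm `< 1`, so the reduction of `A` is a nilpotent matrix over the field `ℤ_[p] ⧸ (p)`. Over a
reduced ring a nilpotent `n × n` matrix has characteristic polynomial `X ^ n`, hence `n`-th power
zero by Cayley–Hamilton; thus `p` divides every entry of `A ^ n`. Writing
`A ^ N = (A ^ n) ^ (N / n) * A ^ (N % n)` gives the second claim.
-/

open Filter Topology Polynomial

namespace Matrix

variable {l m o R : Type*} [Fintype m]

lemma dvd_mul_apply_of_dvd [CommSemiring R] {a b : R} {M : Matrix l m R} {N : Matrix m o R}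
    (hM : ∀ i j, a ∣ M i j) (hN : ∀ i j, b ∣ N i j) (i : l) (j : o) :
    a * b ∣ (M * N) i j :=
  Finset.dvd_sum fun k _ => mul_dvd_mul (hM i k) (hN k j)

lemma pow_dvd_pow_apply_of_dvd [DecidableEq m] [CommSemiring R] {a : R} {M : Matrix m m R}
    (hM : ∀ i j, a ∣ M i j) (q : ℕ) (i j : m) : a ^ q ∣ (M ^ q) i j := by
  induction q generalizing i j with
  | zero => simp
  | succ q ih => rw [pow_succ, pow_succ]; exact dvd_mul_apply_of_dvd ih hM i j

lemma pow_card_eq_zero_of_isNilpotent [DecidableEq m] [CommRing R] [IsReduced R]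
    {M : Matrix m m R} (hM : IsNilpotent M) : M ^ Fintype.card m = 0 := by
  have hcharpoly : M.charpoly = X ^ Fintype.card m := sub_eq_zero.mp <| Polynomial.ext fun i =>
    (Polynomial.isNilpotent_iff.mp (isNilpotent_charpoly_sub_pow_of_isNilpotent hM) i).eq_zero
  simpa only [hcharpoly, map_pow, aeval_X] using M.aeval_self_charpoly

lemma pow_card_apply_mem_of_pow_apply_mem [DecidableEq m] [CommRing R] {I : Ideal R}
    (hI : I.IsRadical) {M : Matrix m m R} {k : ℕ} (hk : ∀ i j, (M ^ k) i j ∈ I) (i j : m) :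
    (M ^ Fintype.card m) i j ∈ I := by
  have : IsReduced (R ⧸ I) := (Ideal.isRadical_iff_quotient_reduced I).mp hI
  let π := (Ideal.Quotient.mk I).mapMatrix (m := m)
  have hnil : IsNilpotent (π M) :=
    ⟨k, by ext i j; rw [← map_pow]; simpa [π, Ideal.Quotient.eq_zero_iff_mem] using hk i j⟩
  have hzero := congr_fun₂ (pow_card_eq_zero_of_isNilpotent hnil) i j
  rw [← map_pow] at hzero
  simpa [π, Ideal.Quotient.eq_zero_iff_mem] using hzero

end Matrix

namespace PadicInt

variable {p : ℕ} [Fact p.Prime]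

lemma eventually_dvd_apply_of_tendsto_zero {ι m : Type*} [Finite m] {l : Filter ι}
    {M : ι → Matrix m m ℤ_[p]} (hM : Tendsto M l (𝓝 0)) :
    ∀ᶠ k in l, ∀ i j, (p : ℤ_[p]) ∣ M k i j := by
  simp only [eventually_all, ← norm_lt_one_iff_dvd]
  intro i j
  have hentry : Tendsto (fun k => M k i j) l (𝓝 0) :=
    tendsto_pi_nhds.mp (tendsto_pi_nhds.mp hM i) j
  simpa [dist_eq_norm] using hentry.eventually (Metric.ball_mem_nhds 0 one_pos)

end PadicInt

theorem stmt7_general (n : ℕ) (p : ℕ) [Fact p.Prime]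
    (A : Matrix (Fin n) (Fin n) ℤ_[p])
    (hA : Filter.Tendsto (fun k => A ^ k) Filter.atTop (nhds 0)) :
    (∀ i j, (p : ℤ_[p]) ∣ (A ^ n) i j) ∧
      ∀ N : ℕ, ∀ i j, (p : ℤ_[p]) ^ (N / n) ∣ (A ^ N) i j := by
  obtain ⟨k, hk⟩ := (PadicInt.eventually_dvd_apply_of_tendsto_zero hA).exists
  have hrad : (Ideal.span {(p : ℤ_[p])}).IsRadical :=
    ((Ideal.span_singleton_prime (NeZero.ne _)).mpr PadicInt.prime_p).isRadical
  have hAn : ∀ i j, (p : ℤ_[p]) ∣ (A ^ n) i j := by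
    simpa only [Ideal.mem_span_singleton, Fintype.card_fin] using
      Matrix.pow_card_apply_mem_of_pow_apply_mem (m := Fin n) hrad
        (by simpa only [Ideal.mem_span_singleton] using hk)
  refine ⟨hAn, fun N i j => ?_⟩
  have hsplit : A ^ N = (A ^ n) ^ (N / n) * A ^ (N % n) := by
    rw [← pow_mul, ← pow_add, Nat.div_add_mod]
  rw [hsplit, ← mul_one ((p : ℤ_[p]) ^ (N / n))]
  exact Matrix.dvd_mul_apply_of_dvd (Matrix.pow_dvd_pow_apply_of_dvd hAn _)
    (fun _ _ => one_dvd _) i j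

/-- If `A ∈ M_n(ℤ_p)` satisfies `A^k → 0`, then every entry of `A^n` is
divisible by `p`, and consequently every entry of `A^N` is divisible by `p^⌊N/n⌋`. -/
theorem stmt7 (n : ℕ) (hn : 1 ≤ n) (p : ℕ) [Fact p.Prime]
    (A : Matrix (Fin n) (Fin n) ℤ_[p])
    (hA : Filter.Tendsto (fun k => A ^ k) Filter.atTop (nhds 0)) :
    (∀ i j, (p : ℤ_[p]) ∣ (A ^ n) i j) ∧
      ∀ N : ℕ, ∀ i j, (p : ℤ_[p]) ^ (N / n) ∣ (A ^ N) i j :=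
  stmt7_general n p A hA
end
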